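/- Let f ∈ L¹(γ) on ℝ with ∫f dγ = 0, and suppose a is a Gaussian atom associated to an admissible interval B (i.e., supp a ⊆ B, ∫a dγ = 0, ‖a‖_∞ ≤ γ(B)⁻¹). Then for every x > 0, |∫_{x}^{∞} a dγ| + |∫_{−∞}^{−x} a dγ| ≤ 𝟙_B(x) + 𝟙_B(−x), and consequently E(a) := ∫₀^∞ x(|∫_x^∞ a dγ| + |∫_{−∞}^{−x} a dγ|) dx ≤ C for an absolute constant C. -/

import Mathlib

open MeasureTheory
open scoped ENNReal

/-- The Gauss measure on ℝ, with density `π^{-1/2} e^{-x²}`. -/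
noncomputable def gauss1 : Measure ℝ :=
  volume.withDensity fun x => ENNReal.ofReal (Real.pi ^ (-(1 : ℝ) / 2) * Real.exp (-x ^ 2))

/-- `mrad t = min(1, 1/t)`, equal to `1` when `t ≤ 1`. -/
noncomputable def mrad (t : ℝ) : ℝ := if t ≤ 1 then 1 else 1 / t

/-!
An atom is supported in `B` and bounded by `γ(B)⁻¹`, so each of its partial integrals is at
most `γ(s ∩ B) / γ(B) ≤ 1` in absolute value. If `t ∉ B`, the interval `B` lies on one side of
`t`, so a tail integral at `t` is either empty or the full integral `∫ a dγ = 0`. Integrating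
`x (𝟙_B(x) + 𝟙_B(-x)) ≤ (|c| + r) (𝟙_B(x) + 𝟙_B(-x))` then bounds `E(a)` by
`4r(|c| + r) ≤ 8`, using admissibility `r ≤ 1`, `r |c| ≤ 1`.
-/

open Set Function

lemma mrad_le_one (t : ℝ) : mrad t ≤ 1 := by
  unfold mrad
  split_ifs with ht
  · rfl
  · exact div_le_one_of_le₀ (not_le.mp ht).le (by linarith [not_le.mp ht])

lemma mrad_mul_le_one (t : ℝ) : mrad t * t ≤ 1 := by
  unfold mrad
  split_ifs with h
  · linarith
  · rw [one_div, inv_mul_cancel₀ (by linarith [not_le.mp h])]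

lemma Set.OrdConnected.subset_Iio_or_subset_Ioi {α : Type*} [LinearOrder α] {S : Set α}
    (hS : S.OrdConnected) {t : α} (ht : t ∉ S) : S ⊆ Iio t ∨ S ⊆ Ioi t := by
  by_contra! h
  obtain ⟨⟨x, hxS, hx⟩, ⟨y, hyS, hy⟩⟩ := And.intro (not_subset.mp h.1) (not_subset.mp h.2)
  exact ht (hS.out hyS hxS ⟨not_lt.mp hy, not_lt.mp hx⟩)

section Atom

variable {α : Type*} [MeasurableSpace α] {μ : Measure α} {S : Set α} {a : α → ℝ}

lemma abs_setIntegral_le_one_of_abs_le_inv_measure (hS : MeasurableSet S)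
    (hsupp : support a ⊆ S) (hbd : ∀ x, |a x| ≤ (μ S).toReal⁻¹) (s : Set α) :
    |∫ x in s, a x ∂μ| ≤ 1 := by
  rcases eq_or_ne (μ S) ∞ with hinf | hfin
  · have ha : a = 0 := funext fun x => abs_nonpos_iff.mp (by simpa [hinf] using hbd x)
    simp [ha]
  have hμ : μ (s ∩ S) < ∞ := (measure_mono inter_subset_right).trans_lt hfin.lt_top
  rw [← indicator_eq_self.mpr hsupp, setIntegral_indicator hS, ← Real.norm_eq_abs]
  calc ‖∫ x in s ∩ S, a x ∂μ‖ ≤ (μ S).toReal⁻¹ * μ.real (s ∩ S) :=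
        norm_setIntegral_le_of_norm_le_const hμ fun x _ => hbd x
    _ ≤ 1 := inv_mul_le_one_of_le₀ (measureReal_mono inter_subset_right hfin) ENNReal.toReal_nonneg

lemma setIntegral_eq_zero_of_subset_or_disjoint (hsupp : support a ⊆ S)
    (hint : ∫ x, a x ∂μ = 0) {s : Set α} (hs : S ⊆ s ∨ Disjoint s S) :
    ∫ x in s, a x ∂μ = 0 := by
  have hzero : ∀ x ∉ S, a x = 0 := fun x hx => notMem_support.mp (mt (@hsupp x) hx)
  rcases hs with hSs | hdisj
  · rw [setIntegral_eq_integral_of_forall_compl_eq_zero fun x hx => hzero x (mt (@hSs x) hx), hint]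
  · exact setIntegral_eq_zero_of_forall_eq_zero fun x hx => hzero x (hdisj.notMem_of_mem_left hx)

lemma abs_setIntegral_le_indicator (hS : MeasurableSet S) (hsupp : support a ⊆ S)
    (hint : ∫ x, a x ∂μ = 0) (hbd : ∀ x, |a x| ≤ (μ S).toReal⁻¹) {s : Set α} {t : α}
    (hs : t ∉ S → S ⊆ s ∨ Disjoint s S) :
    |∫ x in s, a x ∂μ| ≤ S.indicator (fun _ => 1) t := by
  by_cases ht : t ∈ S
  · rw [indicator_of_mem ht]
    exact abs_setIntegral_le_one_of_abs_le_inv_measure hS hsupp hbd s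
  · rw [indicator_of_notMem ht, setIntegral_eq_zero_of_subset_or_disjoint hsupp hint (hs ht),
      abs_zero]

lemma abs_setIntegral_Ioi_le_indicator [LinearOrder α] (hS : MeasurableSet S) (hS' : S.OrdConnected)
    (hsupp : support a ⊆ S) (hint : ∫ x, a x ∂μ = 0) (hbd : ∀ x, |a x| ≤ (μ S).toReal⁻¹)
    (t : α) : |∫ x in Ioi t, a x ∂μ| ≤ S.indicator (fun _ => 1) t :=
  abs_setIntegral_le_indicator hS hsupp hint hbd fun ht =>
    (hS'.subset_Iio_or_subset_Ioi ht).symm.imp_right fun h =>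
      disjoint_of_subset_right h (Iio_disjoint_Ioi_same).symm

lemma abs_setIntegral_Iio_le_indicator [LinearOrder α] (hS : MeasurableSet S) (hS' : S.OrdConnected)
    (hsupp : support a ⊆ S) (hint : ∫ x, a x ∂μ = 0) (hbd : ∀ x, |a x| ≤ (μ S).toReal⁻¹)
    (t : α) : |∫ x in Iio t, a x ∂μ| ≤ S.indicator (fun _ => 1) t :=
  abs_setIntegral_le_indicator hS hsupp hint hbd fun ht =>
    (hS'.subset_Iio_or_subset_Ioi ht).imp_right fun h =>
      disjoint_of_subset_right h Iio_disjoint_Ioi_same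

end Atom

lemma abs_mul_indicator_closedBall_le (c r x : ℝ) :
    |x| * (Metric.closedBall c r).indicator (fun _ => (1 : ℝ)) x ≤
      (|c| + r) * (Metric.closedBall c r).indicator (fun _ => (1 : ℝ)) x := by
  by_cases hx : x ∈ Metric.closedBall c r
  · rw [indicator_of_mem hx, mul_one, mul_one]
    rw [Metric.mem_closedBall, Real.dist_eq] at hx
    linarith [abs_sub_abs_le_abs_sub x c, abs_nonneg c]
  · simp [indicator_of_notMem hx]

lemma setIntegral_Ioi_mul_le_of_le_indicator_closedBall {c r : ℝ} (hr : 0 ≤ r) {g : ℝ → ℝ}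
    (hg : ∀ x > 0, 0 ≤ g x ∧ g x ≤ (Metric.closedBall c r).indicator (fun _ => 1) x +
      (Metric.closedBall c r).indicator (fun _ => 1) (-x)) :
    ∫ x in Ioi 0, x * g x ≤ 4 * r * (|c| + r) := by
  set χ := (Metric.closedBall c r).indicator fun _ => (1 : ℝ)
  have hvol : ∫ x, χ x = 2 * r := by
    rw [← Real.volume_real_closedBall hr]
    exact integral_indicator_one measurableSet_closedBall
  have hχ : Integrable χ := (integrable_indicator_iff measurableSet_closedBall).mpr
    (integrableOn_const measure_closedBall_lt_top.ne)
  have hχ_neg : Integrable fun x => χ (-x) := hχ.comp_neg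
  have hbound : Integrable fun x => (|c| + r) * (χ x + χ (-x)) := (hχ.add hχ_neg).const_mul _
  have hχ_nonneg : ∀ x, 0 ≤ χ x := indicator_nonneg fun _ _ => zero_le_one
  calc ∫ x in Ioi 0, x * g x ≤ ∫ x in Ioi 0, (|c| + r) * (χ x + χ (-x)) := by
        refine integral_mono_of_nonneg ?_ hbound.integrableOn ?_ <;>
          refine (ae_restrict_iff' measurableSet_Ioi).mpr (ae_of_all _ fun x (hx : 0 < x) => ?_)
        · exact mul_nonneg hx.le (hg x hx).1
        · calc x * g x ≤ x * (χ x + χ (-x)) := mul_le_mul_of_nonneg_left (hg x hx).2 hx.le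
            _ = |x| * χ x + |-x| * χ (-x) := by rw [abs_neg, abs_of_pos hx, mul_add]
            _ ≤ (|c| + r) * (χ x + χ (-x)) := by
              rw [mul_add]
              exact add_le_add (abs_mul_indicator_closedBall_le c r x)
                (abs_mul_indicator_closedBall_le c r (-x))
    _ ≤ ∫ x, (|c| + r) * (χ x + χ (-x)) :=
        setIntegral_le_integral hbound (ae_of_all _ fun x => by
          have := hχ_nonneg x; have := hχ_nonneg (-x); positivity)
    _ = 4 * r * (|c| + r) := by
        rw [integral_const_mul, integral_add hχ hχ_neg, integral_neg_eq_self χ, hvol]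
        ring

theorem stmt_9 :
    ∃ C > 0, ∀ (c r : ℝ) (a : ℝ → ℝ), 0 < r → r ≤ mrad |c| →
      Function.support a ⊆ Metric.closedBall c r →
      Integrable a gauss1 →
      (∫ x, a x ∂gauss1) = 0 →
      (∀ x, |a x| ≤ ((gauss1 (Metric.closedBall c r)).toReal)⁻¹) →
      (∀ x > (0 : ℝ),
        |∫ y in Set.Ioi x, a y ∂gauss1| + |∫ y in Set.Iio (-x), a y ∂gauss1| ≤
          (Metric.closedBall c r).indicator (fun _ => (1 : ℝ)) x +
            (Metric.closedBall c r).indicator (fun _ => (1 : ℝ)) (-x)) ∧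
      (∫ x in Set.Ioi (0 : ℝ),
          x * (|∫ y in Set.Ioi x, a y ∂gauss1| + |∫ y in Set.Iio (-x), a y ∂gauss1|)) ≤ C := by
  refine ⟨8, by norm_num, fun c r a hr hrad hsupp _ hint hbd => ?_⟩
  have hB : (Metric.closedBall c r).OrdConnected := Real.closedBall_eq_Icc ▸ ordConnected_Icc
  have hpointwise : ∀ x > (0 : ℝ),
      |∫ y in Ioi x, a y ∂gauss1| + |∫ y in Iio (-x), a y ∂gauss1| ≤
        (Metric.closedBall c r).indicator (fun _ => (1 : ℝ)) x +
          (Metric.closedBall c r).indicator (fun _ => (1 : ℝ)) (-x) := fun x _ =>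
    add_le_add
      (abs_setIntegral_Ioi_le_indicator measurableSet_closedBall hB hsupp hint hbd x)
      (abs_setIntegral_Iio_le_indicator measurableSet_closedBall hB hsupp hint hbd (-x))
  refine ⟨hpointwise, ?_⟩
  have hr_le_one : r ≤ 1 := hrad.trans (mrad_le_one _)
  have hrc_le_one : r * |c| ≤ 1 :=
    (mul_le_mul_of_nonneg_right hrad (abs_nonneg c)).trans (mrad_mul_le_one _)
  calc _ ≤ 4 * r * (|c| + r) :=
        setIntegral_Ioi_mul_le_of_le_indicator_closedBall hr.le fun x hx =>
          ⟨by positivity, hpointwise x hx⟩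
    _ ≤ 8 := by nlinarith
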